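/- Let G be an r-regular graph on n vertices and m edges with line graph L(G). Then φ(T₂(G) : μ) = μ^{n−m} · ∏_{i=1}^m ( μ² − (6r−4)/(3r) − (√((4r−2)/(4r))·μ + (3r−2)/(3r))·θ_i ), where θ_1,…,θ_m are the adjacency eigenvalues of L(G). -/

import Mathlib

/-!
List the vertices of `T₂(G)` as `V(G) ⊕ E(G)` and let `F` be the edge–vertex incidence matrix and
`A` the adjacency matrix of `L(G)`. In `T₂(G)` a vertex of `G` has degree `r` and an edge has
degree `2r`, so the ABS matrix is `[[0, b Fᵀ], [b F, a A]]` with `a = √((4r-2)/(4r))` and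
`b = √((3r-2)/(3r))`. Multiplying `[[μI, B], [C, D]]` on the right by `[[I, -B], [0, μI]]` gives
`μ^m det [[μI, B], [C, D]] = μ^n det (μD - CB)` for every `μ`, without inverting `μ`; with
`F Fᵀ = 2I + A` this turns `μ^m φ(T₂(G), μ)` into `μ^n det ((μ² - 2b²) I - (aμ + b²) A)`, which the
eigenvalues of `A` factor.
-/

open Matrix Polynomial

/-- The atom-bond sum-connectivity (ABS) matrix of a simple graph. -/
noncomputable def absMatrix {V : Type*} [Fintype V] [DecidableEq V]
    (G : SimpleGraph V) [DecidableRel G.Adj] : Matrix V V ℝ :=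
  Matrix.of fun i j => if G.Adj i j then
    Real.sqrt (1 - 2 / ((G.degree i : ℝ) + (G.degree j : ℝ))) else 0

/-- The semitotal line graph `T₂(G)`: vertices are `V(G) ∪ E(G)`; two vertices are adjacent
if they are adjacent edges of `G`, or one is a vertex incident to the other (an edge). -/
def semitotalLineGraph {V : Type*} (G : SimpleGraph V) : SimpleGraph (V ⊕ G.edgeSet) where
  Adj x y := match x, y with
    | Sum.inl _, Sum.inl _ => False
    | Sum.inl v, Sum.inr e => v ∈ (e : Sym2 V)
    | Sum.inr e, Sum.inl v => v ∈ (e : Sym2 V)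
    | Sum.inr e, Sum.inr f => e ≠ f ∧ ∃ v, v ∈ (e : Sym2 V) ∧ v ∈ (f : Sym2 V)
  symm := ⟨by
    rintro (v | e) (w | f) h <;> simp_all
    · obtain ⟨h1, v, hv⟩ := h
      exact ⟨Ne.symm h1, v, hv.2, hv.1⟩⟩
  loopless := ⟨by rintro (v | e) h <;> simp_all⟩

namespace Matrix

variable {n m R : Type*} [Fintype n] [Fintype m] [DecidableEq n] [DecidableEq m]

theorem det_fromBlocks_smul_one₁₁ [CommRing R] (t : R) (B : Matrix n m R) (C : Matrix m n R)
    (D : Matrix m m R) :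
    t ^ Fintype.card m * (fromBlocks (t • 1) B C D).det =
      t ^ Fintype.card n * (t • D - C * B).det := by
  have hmul : fromBlocks (t • 1) B C D * fromBlocks 1 (-B) 0 (t • 1) =
      fromBlocks (t • 1) 0 C (t • D - C * B) := by
    rw [fromBlocks_multiply]
    congr 1 <;> simp [sub_eq_neg_add]
  have h := congrArg det hmul
  rw [det_mul, det_fromBlocks_zero₂₁, det_fromBlocks_zero₁₂] at h
  simpa [det_smul, mul_comm] using h

theorem det_smul_one_sub_smul_eq_prod {K ι : Type*} [Field K] [Fintype ι] [DecidableEq ι]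
    (A : Matrix ι ι K) {k : ℕ} (θ : Fin k → K) (hA : A.charpoly = ∏ i, (X - C (θ i)))
    (s t : K) :
    (s • 1 - t • A).det = ∏ i, (s - t * θ i) := by
  have hcard : Fintype.card ι = k := by
    simpa using congrArg natDegree hA
  rcases eq_or_ne t 0 with rfl | ht
  · simp [hcard]
  · have hscale : s • (1 : Matrix ι ι K) - t • A = t • (scalar ι (s / t) - A) := by
      rw [smul_sub, scalar_apply, ← smul_one_eq_diagonal, smul_smul, mul_div_cancel₀ s ht]
    rw [hscale, det_smul, ← eval_charpoly, hA, eval_prod, hcard, ← Fin.prod_const,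
      ← Finset.prod_mul_distrib]
    refine Finset.prod_congr rfl fun i _ => ?_
    simp only [eval_sub, eval_X, eval_C]
    field_simp

end Matrix

namespace SimpleGraph

variable {V R : Type*} {G : SimpleGraph V}

@[simp] theorem semitotalLineGraph_adj_inl_inl {v w : V} :
    ¬(semitotalLineGraph G).Adj (.inl v) (.inl w) :=
  id

@[simp] theorem semitotalLineGraph_adj_inl_inr {v : V} {e : G.edgeSet} :
    (semitotalLineGraph G).Adj (.inl v) (.inr e) ↔ v ∈ (e : Sym2 V) :=
  .rfl

@[simp] theorem semitotalLineGraph_adj_inr_inl {v : V} {e : G.edgeSet} :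
    (semitotalLineGraph G).Adj (.inr e) (.inl v) ↔ v ∈ (e : Sym2 V) :=
  .rfl

@[simp] theorem semitotalLineGraph_adj_inr_inr {e f : G.edgeSet} :
    (semitotalLineGraph G).Adj (.inr e) (.inr f) ↔ G.lineGraph.Adj e f :=
  lineGraph_adj_iff_exists.symm

variable [DecidableEq V]

/-- The transpose of the paper's incidence matrix `F`: rows are indexed by the edges. -/
noncomputable def edgeIncMatrix (G : SimpleGraph V) (R : Type*) [Zero R] [One R] :
    Matrix G.edgeSet V R :=
  Matrix.of fun e v => if v ∈ (e : Sym2 V) then 1 else 0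

theorem edgeIncMatrix_apply [Zero R] [One R] (e : G.edgeSet) (v : V) :
    G.edgeIncMatrix R e v = if v ∈ (e : Sym2 V) then 1 else 0 := rfl

theorem adjMatrix_semitotalLineGraph [Zero R] [One R] [DecidableRel (semitotalLineGraph G).Adj]
    [DecidableRel G.lineGraph.Adj] :
    (semitotalLineGraph G).adjMatrix R =
      fromBlocks 0 (G.edgeIncMatrix R)ᵀ (G.edgeIncMatrix R) (G.lineGraph.adjMatrix R) := by
  ext (v | e) (w | f) <;> simp [adjMatrix_apply, edgeIncMatrix_apply]

variable [Fintype V]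

theorem edgeIncMatrix_mulVec_mk [NonAssocSemiring R] {u w : V} (h : G.Adj u w) (g : V → R) :
    (G.edgeIncMatrix R *ᵥ g) ⟨s(u, w), h⟩ = g u + g w := by
  have hfilter : Finset.univ.filter (· ∈ s(u, w)) = {u, w} := by ext; simp
  simp only [mulVec, dotProduct, edgeIncMatrix_apply, ite_mul, one_mul, zero_mul,
    ← Finset.sum_filter, hfilter, Finset.sum_pair h.ne]

theorem edgeIncMatrix_mulVec_one [NonAssocSemiring R] : G.edgeIncMatrix R *ᵥ 1 = 2 := by
  ext ⟨e, he⟩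
  induction e using Sym2.ind with
  | _ u w => simp [edgeIncMatrix_mulVec_mk he, one_add_one_eq_two]

theorem edgeIncMatrix_mul_transpose [NonAssocSemiring R] [DecidableRel G.lineGraph.Adj] :
    G.edgeIncMatrix R * (G.edgeIncMatrix R)ᵀ = 2 • 1 + G.lineGraph.adjMatrix R := by
  ext ⟨e, he⟩ f
  induction e using Sym2.ind with
  | _ u w =>
  change (G.edgeIncMatrix R *ᵥ fun v => G.edgeIncMatrix R f v) ⟨s(u, w), he⟩ = _
  rw [edgeIncMatrix_mulVec_mk he, Matrix.add_apply, Matrix.smul_apply, adjMatrix_apply]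
  by_cases hef : ⟨s(u, w), he⟩ = f
  · subst hef
    simp [edgeIncMatrix_apply, one_add_one_eq_two]
  · have hadj : G.lineGraph.Adj ⟨s(u, w), he⟩ f ↔ u ∈ (f : Sym2 V) ∨ w ∈ (f : Sym2 V) := by
      simp [lineGraph_adj_iff_exists, hef]
    have hboth : ¬(u ∈ (f : Sym2 V) ∧ w ∈ (f : Sym2 V)) := fun ⟨hu, hw⟩ =>
      hef (Subtype.ext (Sym2.eq_of_ne_mem he.ne (by simp) (by simp) hu hw))
    simp only [one_apply_ne hef, hadj, edgeIncMatrix_apply, smul_zero, zero_add]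
    split_ifs <;> simp_all

variable [DecidableRel G.Adj]

theorem card_filter_mem_edgeSet (v : V) :
    (Finset.univ.filter fun e : G.edgeSet => v ∈ (e : Sym2 V)).card = G.degree v := by
  rw [← Fintype.card_subtype, ← card_incidenceSet_eq_degree]
  exact Fintype.card_congr (Equiv.subtypeSubtypeEquivSubtypeInter (· ∈ G.edgeSet) (v ∈ ·))

theorem edgeIncMatrix_transpose_mulVec_one [NonAssocSemiring R] :
    (G.edgeIncMatrix R)ᵀ *ᵥ 1 = fun v => (G.degree v : R) := by
  ext v
  simp [mulVec, dotProduct, edgeIncMatrix_apply, ← card_filter_mem_edgeSet v]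

variable [DecidableRel (semitotalLineGraph G).Adj]

theorem degree_semitotalLineGraph_inl (v : V) :
    (semitotalLineGraph G).degree (.inl v) = G.degree v := by
  classical
  have hdeg := adjMatrix_mulVec_const_apply (G := semitotalLineGraph G) (a := 1) (v := .inl v)
  rw [mul_one, adjMatrix_semitotalLineGraph, fromBlocks_mulVec, Function.const_one] at hdeg
  simpa [edgeIncMatrix_transpose_mulVec_one] using hdeg.symm

theorem degree_semitotalLineGraph_inr {u w : V} (h : G.Adj u w) :
    (semitotalLineGraph G).degree (.inr ⟨s(u, w), h⟩) = G.degree u + G.degree w := by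
  classical
  have hdeg := adjMatrix_mulVec_const_apply (G := semitotalLineGraph G) (a := 1)
    (v := .inr ⟨s(u, w), h⟩)
  rw [mul_one, adjMatrix_semitotalLineGraph, fromBlocks_mulVec, Function.const_one] at hdeg
  simp only [Pi.one_comp, Sum.elim_inr, Pi.add_apply, edgeIncMatrix_mulVec_one, Nat.cast_id] at hdeg
  calc (semitotalLineGraph G).degree (.inr ⟨s(u, w), h⟩)
      = ((2 • 1 + G.lineGraph.adjMatrix ℕ) *ᵥ 1) ⟨s(u, w), h⟩ := by simp [← hdeg, add_mulVec]
    _ = (G.edgeIncMatrix ℕ *ᵥ ((G.edgeIncMatrix ℕ)ᵀ *ᵥ 1)) ⟨s(u, w), h⟩ := by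
      rw [mulVec_mulVec, edgeIncMatrix_mul_transpose]
    _ = G.degree u + G.degree w := by
      rw [edgeIncMatrix_transpose_mulVec_one, edgeIncMatrix_mulVec_mk]
      rfl

theorem degree_semitotalLineGraph_inr_of_isRegularOfDegree {r : ℕ}
    (hreg : G.IsRegularOfDegree r) (e : G.edgeSet) :
    (semitotalLineGraph G).degree (.inr e) = 2 * r := by
  obtain ⟨e, he⟩ := e
  induction e using Sym2.ind with
  | _ u w => rw [degree_semitotalLineGraph_inr he, hreg u, hreg w, two_mul]

end SimpleGraph

theorem absMatrix_apply {W : Type*} [Fintype W] [DecidableEq W] (H : SimpleGraph W)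
    [DecidableRel H.Adj] (i j : W) :
    absMatrix H i j = H.adjMatrix ℝ i j * √(1 - 2 / (H.degree i + H.degree j)) := by
  by_cases h : H.Adj i j <;> simp [absMatrix, h]

section Regular

open SimpleGraph

variable {V : Type*} [Fintype V] [DecidableEq V] {G : SimpleGraph V} [DecidableRel G.Adj]
  [DecidableRel (semitotalLineGraph G).Adj] [DecidableRel G.lineGraph.Adj] {r : ℕ}

theorem absMatrix_semitotalLineGraph (hr : 0 < r) (hreg : G.IsRegularOfDegree r) :
    absMatrix (semitotalLineGraph G) =
      fromBlocks 0 (√((3 * r - 2) / (3 * r)) • (G.edgeIncMatrix ℝ)ᵀ)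
        (√((3 * r - 2) / (3 * r)) • G.edgeIncMatrix ℝ)
        (√((4 * r - 2) / (4 * r)) • G.lineGraph.adjMatrix ℝ) := by
  have hr' : (r : ℝ) ≠ 0 := by positivity
  have hmixed : 1 - 2 / ((r : ℝ) + (2 * r : ℕ)) = (3 * r - 2) / (3 * r) := by
    push_cast; field_simp; ring
  have hedge : 1 - 2 / (((2 * r : ℕ) : ℝ) + (2 * r : ℕ)) = (4 * r - 2) / (4 * r) := by
    push_cast; field_simp; ring
  ext (v | e) (w | f) <;>
    simp only [absMatrix_apply, adjMatrix_semitotalLineGraph, fromBlocks_apply₁₁,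
      fromBlocks_apply₁₂, fromBlocks_apply₂₁, fromBlocks_apply₂₂, Matrix.zero_apply, zero_mul,
      Matrix.smul_apply, smul_eq_mul, degree_semitotalLineGraph_inl,
      degree_semitotalLineGraph_inr_of_isRegularOfDegree hreg, hreg _]
  · rw [hmixed, mul_comm]
  · rw [add_comm, hmixed, mul_comm]
  · rw [hedge, mul_comm]

theorem det_smul_one_sub_absMatrix_semitotalLineGraph (hr : 0 < r)
    (hreg : G.IsRegularOfDegree r) (μ : ℝ) :
    μ ^ Fintype.card G.edgeSet * (μ • 1 - absMatrix (semitotalLineGraph G)).det =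
      μ ^ Fintype.card V * ((μ ^ 2 - (6 * r - 4) / (3 * r)) • 1 -
        (√((4 * r - 2) / (4 * r)) * μ + (3 * r - 2) / (3 * r)) • G.lineGraph.adjMatrix ℝ).det := by
  have hblocks : μ • 1 - absMatrix (semitotalLineGraph G) =
      fromBlocks (μ • 1) (-(√((3 * r - 2) / (3 * r)) • (G.edgeIncMatrix ℝ)ᵀ))
        (-(√((3 * r - 2) / (3 * r)) • G.edgeIncMatrix ℝ))
        (μ • 1 - √((4 * r - 2) / (4 * r)) • G.lineGraph.adjMatrix ℝ) := by
    rw [absMatrix_semitotalLineGraph hr hreg, ← fromBlocks_one, fromBlocks_smul, sub_eq_add_neg,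
      fromBlocks_neg, fromBlocks_add]
    simp [sub_eq_add_neg]
  have hsq : √((3 * r - 2) / (3 * r)) * √((3 * r - 2) / (3 * r)) = (3 * r - 2) / (3 * r) := by
    have hr' : (1 : ℝ) ≤ r := Nat.one_le_cast.2 hr
    exact Real.mul_self_sqrt (div_nonneg (by linarith) (by positivity))
  have h6 : ((6 : ℝ) * r - 4) / (3 * r) = 2 * ((3 * r - 2) / (3 * r)) := by ring
  rw [hblocks, det_fromBlocks_smul_one₁₁, h6]
  simp only [Matrix.neg_mul, Matrix.mul_neg, neg_neg, Matrix.smul_mul, Matrix.mul_smul, smul_neg,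
    smul_smul, edgeIncMatrix_mul_transpose, hsq]
  congr 2
  module

end Regular

/-- For an `r`-regular graph `G` on `n` vertices and `m` edges whose line graph `L(G)` has
adjacency eigenvalues `θ_1, …, θ_m`,
`φ(T₂(G) : μ) = μ^{n−m} ∏ᵢ (μ² − (6r−4)/(3r) − (√((4r−2)/(4r))μ + (3r−2)/(3r))θᵢ)`,
stated multiplied through by `μ^m` so that only natural exponents occur. -/
theorem abs_charpoly_semitotal_line {V : Type*} [Fintype V] [DecidableEq V]
    (G : SimpleGraph V) [DecidableRel G.Adj] [DecidableRel (semitotalLineGraph G).Adj]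
    [DecidableRel (SimpleGraph.lineGraph G).Adj]
    (r : ℕ) (hr : 1 ≤ r) (hreg : G.IsRegularOfDegree r)
    (n m : ℕ) (hn : n = Fintype.card V) (hm : m = G.edgeFinset.card)
    (theta : Fin m → ℝ)
    (htheta : ((SimpleGraph.lineGraph G).adjMatrix ℝ).charpoly =
      ∏ i : Fin m, (X - C (theta i))) :
    X ^ m * (absMatrix (semitotalLineGraph G)).charpoly =
      X ^ n * ∏ i : Fin m,
        (X ^ 2 - C ((6 * (r : ℝ) - 4) / (3 * (r : ℝ))) -
          (C (Real.sqrt ((4 * (r : ℝ) - 2) / (4 * (r : ℝ)))) * X +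
            C ((3 * (r : ℝ) - 2) / (3 * (r : ℝ)))) * C (theta i)) := by
  have hm' : Fintype.card G.edgeSet = m := by rw [hm, SimpleGraph.edgeFinset_card]
  have hdet := det_smul_one_sub_absMatrix_semitotalLineGraph (G := G) hr hreg
  simp only [hm', ← hn, det_smul_one_sub_smul_eq_prod _ _ htheta] at hdet
  refine Polynomial.funext fun μ => ?_
  simp only [eval_mul, eval_pow, eval_X, eval_prod, eval_sub, eval_add, eval_C, eval_charpoly,
    scalar_apply, ← smul_one_eq_diagonal, hdet]
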